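/- There is no function F from (ℕ → ℕ) to ℝ such that (Monotonicity) whenever f eventually strictly dominates g (i.e., there exists n₀ such that for all n > n₀, f(n) > g(n)), we have F(f) > F(g), and (Nontriviality) for every real r there exists f : ℕ → ℕ with F(f) > r. -/

import Mathlib

/-! Choose `f k` with `F (f k) > k`. The diagonal bound `n ↦ max_{k ≤ n} f k n + 1` eventually
dominates every `f k`, so its measure exceeds every natural number. -/

theorem exists_eventually_gt_of_seq (f : ℕ → ℕ → ℕ) :
    ∃ g : ℕ → ℕ, ∀ k, ∃ n₀, ∀ n > n₀, g n > f k n := by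
  refine ⟨fun n => (Finset.range (n + 1)).sup (fun k => f k n) + 1, fun k => ⟨k, fun n hn => ?_⟩⟩
  have hk : k ∈ Finset.range (n + 1) := Finset.mem_range.mpr (by omega)
  exact Nat.lt_succ_of_le (Finset.le_sup (f := fun j => f j n) hk)

theorem no_well_behaved_real_measure :
    ¬ ∃ F : (ℕ → ℕ) → ℝ,
      (∀ f g : ℕ → ℕ, (∃ n₀ : ℕ, ∀ n > n₀, f n > g n) → F f > F g) ∧
      (∀ r : ℝ, ∃ f : ℕ → ℕ, F f > r) := by
  rintro ⟨F, hmono, hunbdd⟩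
  choose f hf using fun k : ℕ => hunbdd k
  obtain ⟨g, hg⟩ := exists_eventually_gt_of_seq f
  obtain ⟨k, hk⟩ := exists_nat_gt (F g)
  linarith [hf k, hmono g (f k) (hg k)]
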